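/- Let σ ∈ S_n. Then σ ≼ c holds if and only if the following two conditions hold: (1) every cycle of σ carries the cyclic order induced by c, i.e. for every x with σ(x) ≠ x one has σ(x) = min{y ∈ C_σ(x) : y > x} if x < max C_σ(x), and σ(x) = min C_σ(x) if x = max C_σ(x); (2) the cycles of σ form a non-crossing partition of {1,…,n}: there exist no 1 ≤ p < q < r < s ≤ n such that p and r belong to one cycle of σ and q and s belong to a different cycle of σ. -/

import Mathlib

/-!
Write `ℓ = cycleCount`. Multiplying a permutation by a transposition `swap a b` merges the cycles
of `a` and `b` or splits their common cycle, so it changes `ℓ` by exactly one; hence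
`|σ| = n - ℓ σ` is subadditive and `σ ≼ c` means `ℓ σ + ℓ (σ⁻¹ c) = n + 1`.

Both conditions of the theorem are preserved by the merge `σ ↦ swap (σ u) (σ m) * σ` of the
cycles of `u` and `m` (it sends `u ↦ σ m` and `m ↦ σ u`) whenever the cyclic arc `(u, m]` is a
union of cycles of `σ`: the cycle of `m` then lies inside that arc and the cycle of `u` outside it.

If `σ` satisfies the conditions and is not `c`, such a merge exists (take `u` just before the
least point outside the cycle of `0`); it lowers `ℓ σ` by one and `ℓ (σ⁻¹ c)` by at most one, so
induction on `ℓ σ` gives `σ ≼ c`. Conversely, if `σ ≼ c`, splitting a point `x` off its cycle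
gives `σ'` with `σ' ≼ c`, so `σ'` satisfies the conditions by induction, and counting shows that
`x` and `σ⁻¹ x` lie in one cycle of the Kreweras complement `σ'⁻¹ c`. Walking along a cycle of
`σ'⁻¹ c` means jumping over a gap of a cycle of `σ'`, so the interval between `x` and `σ⁻¹ x` is a
union of cycles of `σ'`, and putting `x` back is a merge of the above kind.
-/

/-- ℓ(σ): the number of cycles (orbits) of σ, including fixed points, counted via the
minimal representative of each orbit. -/
noncomputable def cycleCount {n : ℕ} (σ : Equiv.Perm (Fin n)) : ℕ :=
  Set.ncard {x : Fin n | ∀ y, σ.SameCycle x y → x ≤ y}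

/-- |σ| := n − ℓ(σ). -/
noncomputable def normPerm {n : ℕ} (σ : Equiv.Perm (Fin n)) : ℕ := n - cycleCount σ

/-- σ₁ ≼ σ₂ iff |σ₂| = |σ₁| + |σ₁⁻¹σ₂|. -/
def precLe {n : ℕ} (σ₁ σ₂ : Equiv.Perm (Fin n)) : Prop :=
  normPerm σ₂ = normPerm σ₁ + normPerm (σ₁⁻¹ * σ₂)

/-- Σ_n(k): tuples of k transpositions with |τ₁⋯τ_k| = k and τ₁⋯τ_k ≼ (1 … n). -/
def SigmaSet (n k : ℕ) : Set (Fin k → Equiv.Perm (Fin n)) :=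
  {τ | (∀ l, (τ l).IsSwap) ∧ normPerm (List.ofFn τ).prod = k ∧
      precLe (List.ofFn τ).prod (finRotate n)}

/-- γ_m := τ₁∘⋯∘τ_m, the product of the first m entries of the chain. -/
def gammaP {n k : ℕ} (τ : Fin k → Equiv.Perm (Fin n)) (m : ℕ) : Equiv.Perm (Fin n) :=
  ((List.ofFn τ).take m).prod

open Equiv Equiv.Perm

namespace Equiv.Perm

theorem inv_swap_apply_mul {α : Type*} [DecidableEq α] (π : Perm α) (u m : α) :
    (swap (π u) (π m) * π)⁻¹ = swap u m * π⁻¹ := by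
  simp [swap_apply_apply, mul_assoc]

variable {α : Type*} [Finite α] {π : Perm α} {a b x y : α}

theorem SameCycle.rel_of_forall_apply {R : α → α → Prop} (refl : ∀ z, R z z)
    (trans : ∀ {x y z}, R x y → R y z → R x z) (step : ∀ z, R z (π z))
    (h : π.SameCycle x y) : R x y := by
  obtain ⟨k, -, rfl⟩ := h.exists_pow_eq'
  clear h
  induction k with
  | zero => exact refl x
  | succ k ih => rw [pow_succ', mul_apply]; exact trans ih (step _)

theorem SameCycle.mem_of_forall_apply_mem {S : Set α} (hS : ∀ z ∈ S, π z ∈ S)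
    (h : π.SameCycle x y) (hx : x ∈ S) : y ∈ S :=
  h.rel_of_forall_apply (R := fun x y => x ∈ S → y ∈ S) (fun _ => id)
    (fun hxy hyz hx => hyz (hxy hx)) (hS ·) hx

variable [DecidableEq α]

/-- `swap a b * π` sends `π⁻¹ a` to `b` and agrees with `π` on the rest of the `π`-cycle of `a`. -/
theorem sameCycle_swap_mul_of_not_sameCycle (h : ¬π.SameCycle a b) :
    (swap a b * π).SameCycle a b := by
  set f := swap a b * π
  suffices hpre : f.SameCycle a (π⁻¹ a) by
    have : f (π⁻¹ a) = b := by simp [f]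
    exact hpre.trans (this ▸ sameCycle_apply_right.2 .rfl)
  by_contra hpre
  refine hpre (SameCycle.mem_of_forall_apply_mem (S := {z | f.SameCycle a z ∧ π.SameCycle a z})
    (fun z ⟨hfz, hπz⟩ => ?_) (sameCycle_symm_apply_right.2 .rfl) ⟨.rfl, .rfl⟩).1
  have hz : f z = π z := by
    refine swap_apply_of_ne_of_ne (fun hza => hpre ?_) (fun hzb => h ?_)
    · rwa [← eq_inv_iff_eq.2 hza]
    · exact hzb ▸ sameCycle_apply_right.2 hπz
  exact ⟨hz ▸ sameCycle_apply_right.2 hfz, sameCycle_apply_right.2 hπz⟩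

theorem sameCycle_swap_mul_swap_apply (h : ¬π.SameCycle a b) (z : α) :
    (swap a b * π).SameCycle z (swap a b z) := by
  rcases eq_or_ne z a with rfl | hza
  · rw [swap_apply_left]; exact sameCycle_swap_mul_of_not_sameCycle h
  rcases eq_or_ne z b with rfl | hzb
  · rw [swap_apply_right]; exact (sameCycle_swap_mul_of_not_sameCycle h).symm
  rw [swap_apply_of_ne_of_ne hza hzb]

theorem SameCycle.swap_mul (h : ¬π.SameCycle a b) (hxy : π.SameCycle x y) :
    (swap a b * π).SameCycle x y :=
  hxy.rel_of_forall_apply (fun _ => .rfl) (·.trans ·) fun z => by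
    have := sameCycle_swap_mul_swap_apply h ((swap a b * π) z)
    rwa [sameCycle_apply_left, mul_apply, swap_apply_self] at this

theorem sameCycle_swap_mul_iff (h : ¬π.SameCycle a b) :
    (swap a b * π).SameCycle x y ↔ π.SameCycle x y ∨
      (π.SameCycle a x ∨ π.SameCycle b x) ∧ (π.SameCycle a y ∨ π.SameCycle b y) := by
  constructor
  · refine SameCycle.rel_of_forall_apply (R := fun x y => π.SameCycle x y ∨
      (π.SameCycle a x ∨ π.SameCycle b x) ∧ (π.SameCycle a y ∨ π.SameCycle b y))
      (fun _ => .inl .rfl) ?_ fun z => ?_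
    · rintro x y z (hxy | ⟨hx, hy⟩) (hyz | ⟨hy', hz⟩)
      · exact .inl (hxy.trans hyz)
      · exact .inr ⟨hy'.imp (·.trans hxy.symm) (·.trans hxy.symm), hz⟩
      · exact .inr ⟨hx, hy.imp (·.trans hyz) (·.trans hyz)⟩
      · exact .inr ⟨hx, hz⟩
    have hz : π.SameCycle z (π z) := sameCycle_apply_right.2 .rfl
    rw [mul_apply]
    rcases eq_or_ne (π z) a with hza | hza
    · rw [hza, swap_apply_left]; exact .inr ⟨.inl (hza ▸ hz).symm, .inr .rfl⟩
    rcases eq_or_ne (π z) b with hzb | hzb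
    · rw [hzb, swap_apply_right]; exact .inr ⟨.inr (hzb ▸ hz).symm, .inl .rfl⟩
    rw [swap_apply_of_ne_of_ne hza hzb]; exact .inl hz
  · have hmerged : ∀ z, π.SameCycle a z ∨ π.SameCycle b z → (swap a b * π).SameCycle a z := by
      rintro z (hz | hz)
      · exact hz.swap_mul h
      · exact (sameCycle_swap_mul_of_not_sameCycle h).trans (hz.swap_mul h)
    rintro (hxy | ⟨hx, hy⟩)
    · exact hxy.swap_mul h
    · exact (hmerged x hx).symm.trans (hmerged y hy)

theorem not_sameCycle_swap_mul (hab : a ≠ b) (h : π.SameCycle a b) :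
    ¬(swap a b * π).SameCycle a b := by
  have hex : ∃ k, (π ^ k) a = b := let ⟨k, _, hk⟩ := h.exists_pow_eq'; ⟨k, hk⟩
  set k := Nat.find hex
  have hk : (π ^ k) a = b := Nat.find_spec hex
  have hmin : ∀ j < k, (π ^ j) a ≠ b := fun j hj => Nat.find_min hex hj
  have hk0 : 0 < k := Nat.pos_of_ne_zero fun h0 => hab (by simpa [h0] using hk)
  -- the path `a, π a, …, π ^ (k - 1) a` is closed under `swap a b * π`
  set S := {z | ∃ j < k, (π ^ j) a = z}
  have hS : ∀ z ∈ S, (swap a b * π) z ∈ S := by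
    rintro _ ⟨j, hj, rfl⟩
    rw [mul_apply, ← mul_apply π, ← pow_succ']
    rcases eq_or_ne (j + 1) k with hjk | hjk
    · exact ⟨0, hk0, by rw [hjk, hk, swap_apply_right]; rfl⟩
    refine ⟨j + 1, by omega, (swap_apply_of_ne_of_ne (fun hja => ?_) (hmin _ (by omega))).symm⟩
    apply hmin (k - (j + 1)) (by omega)
    rw [← hja, ← mul_apply, ← pow_add, Nat.sub_add_cancel (by omega), hk]
  intro hf
  obtain ⟨j, hj, hjb⟩ := hf.mem_of_forall_apply_mem hS ⟨0, hk0, rfl⟩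
  exact hmin j hj hjb

end Equiv.Perm

section CycleCount

variable {n : ℕ} {π : Perm (Fin n)} {a b : Fin n}

def cycleMins (π : Perm (Fin n)) : Set (Fin n) := {x | ∀ y, π.SameCycle x y → x ≤ y}

theorem cycleCount_eq_ncard_cycleMins (π : Perm (Fin n)) :
    cycleCount π = (cycleMins π).ncard := rfl

theorem exists_mem_cycleMins_sameCycle (π : Perm (Fin n)) (x : Fin n) :
    ∃ m ∈ cycleMins π, π.SameCycle x m := by
  obtain ⟨m, hm, hmin⟩ :=
    (Finset.univ.filter (π.SameCycle x)).exists_min_image id ⟨x, by simpa using .rfl⟩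
  simp only [Finset.mem_filter, Finset.mem_univ, true_and, id] at hm hmin
  exact ⟨m, fun y hy => hmin y (hm.trans hy), hm⟩

theorem eq_of_mem_cycleMins {m m' : Fin n} (hm : m ∈ cycleMins π) (hm' : m' ∈ cycleMins π)
    (h : π.SameCycle m m') : m = m' :=
  le_antisymm (hm m' h) (hm' m h.symm)

theorem cycleMins_swap_mul {ma mb : Fin n} (h : ¬π.SameCycle a b) (hma : ma ∈ cycleMins π)
    (hmb : mb ∈ cycleMins π) (ha : π.SameCycle a ma) (hb : π.SameCycle b mb) (hle : ma ≤ mb) :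
    cycleMins (swap a b * π) = cycleMins π \ {mb} := by
  ext x
  simp only [Set.mem_sdiff, Set.mem_singleton_iff]
  constructor
  · intro hx
    refine ⟨fun y hy => hx y (hy.swap_mul h), ?_⟩
    rintro rfl
    have hxma : (swap a b * π).SameCycle x ma :=
      (sameCycle_swap_mul_iff h).2 (.inr ⟨.inr hb, .inl ha⟩)
    obtain rfl := le_antisymm hle (hx ma hxma)
    exact h (ha.trans hb.symm)
  · rintro ⟨hx, hxmb⟩ y hy
    rcases (sameCycle_swap_mul_iff h).1 hy with hxy | ⟨hxab, hyab⟩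
    · exact hx y hxy
    obtain rfl : x = ma := hxab.elim (fun hxa => eq_of_mem_cycleMins hx hma (hxa.symm.trans ha))
      fun hxb => absurd (eq_of_mem_cycleMins hx hmb (hxb.symm.trans hb)) hxmb
    rcases hyab with hya | hyb
    · exact hma y (ha.symm.trans hya)
    · exact hle.trans (hmb y (hb.symm.trans hyb))

theorem cycleCount_swap_mul_add_one (h : ¬π.SameCycle a b) :
    cycleCount (swap a b * π) + 1 = cycleCount π := by
  obtain ⟨ma, hma, ha⟩ := exists_mem_cycleMins_sameCycle π a
  obtain ⟨mb, hmb, hb⟩ := exists_mem_cycleMins_sameCycle π b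
  rw [cycleCount_eq_ncard_cycleMins, cycleCount_eq_ncard_cycleMins]
  rcases le_total ma mb with hle | hle
  · rw [cycleMins_swap_mul h hma hmb ha hb hle]
    exact Set.ncard_sdiff_singleton_add_one hmb
  · rw [swap_comm, cycleMins_swap_mul (fun h' => h h'.symm) hmb hma hb ha hle]
    exact Set.ncard_sdiff_singleton_add_one hma

theorem cycleCount_swap_mul_of_sameCycle (hab : a ≠ b) (h : π.SameCycle a b) :
    cycleCount (swap a b * π) = cycleCount π + 1 := by
  rw [← cycleCount_swap_mul_add_one (not_sameCycle_swap_mul hab h), swap_mul_self_mul]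

theorem cycleCount_swap_mul_le (a b : Fin n) (π : Perm (Fin n)) :
    cycleCount (swap a b * π) ≤ cycleCount π + 1 := by
  rcases eq_or_ne a b with rfl | hab
  · rw [swap_self, ← Perm.one_def, one_mul]; omega
  by_cases h : π.SameCycle a b
  · exact (cycleCount_swap_mul_of_sameCycle hab h).le
  · have := cycleCount_swap_mul_add_one h
    omega

theorem cycleCount_le (π : Perm (Fin n)) : cycleCount π ≤ n :=
  (Set.ncard_le_ncard (Set.subset_univ _)).trans (by simp [Set.ncard_univ])

theorem cycleCount_one : cycleCount (1 : Perm (Fin n)) = n := by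
  rw [cycleCount_eq_ncard_cycleMins, show cycleMins (1 : Perm (Fin n)) = Set.univ from
    Set.eq_univ_of_forall fun x y hy => (sameCycle_one.1 hy).le]
  simp [Set.ncard_univ]

theorem eq_one_of_cycleCount_eq (h : cycleCount π = n) : π = 1 := by
  have huniv : cycleMins π = Set.univ :=
    Set.eq_of_subset_of_ncard_le (Set.subset_univ _) (by simp [Set.ncard_univ, ← h]; rfl)
  ext x
  exact congrArg Fin.val (eq_of_mem_cycleMins (huniv ▸ trivial) (huniv ▸ trivial)
    (sameCycle_apply_left.2 .rfl : π.SameCycle (π x) x))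

theorem one_le_cycleCount (π : Perm (Fin (n + 1))) : 1 ≤ cycleCount π :=
  (Set.ncard_pos (Set.toFinite _)).2 ⟨0, fun y _ => Fin.zero_le y⟩

/-- `|σ * τ| ≤ |σ| + |τ|` for `|σ| = n - cycleCount σ`. -/
theorem cycleCount_add_cycleCount_le (σ τ : Perm (Fin n)) :
    cycleCount σ + cycleCount τ ≤ n + cycleCount (σ * τ) := by
  induction hk : n - cycleCount σ generalizing σ with
  | zero =>
    rw [eq_one_of_cycleCount_eq (le_antisymm (cycleCount_le σ) (by omega)), one_mul,
      cycleCount_one]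
  | succ k ih =>
    obtain ⟨x, hx⟩ : ∃ x, σ x ≠ x := by
      by_contra! hfix
      rw [show σ = 1 from Equiv.ext hfix, cycleCount_one] at hk
      omega
    have hsplit := cycleCount_swap_mul_of_sameCycle (Ne.symm hx) (sameCycle_apply_right.2 .rfl)
    have hih := ih (swap x (σ x) * σ) (by omega)
    have hswap := cycleCount_swap_mul_le x (σ x) (σ * τ)
    rw [mul_assoc] at hih
    omega

theorem val_finRotate (x : Fin (n + 1)) :
    (x : ℕ) = n ∧ (finRotate (n + 1) x : ℕ) = 0 ∨ (x : ℕ) < n ∧ (finRotate (n + 1) x : ℕ) = x + 1 := by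
  rcases eq_or_ne x (Fin.last n) with rfl | hx
  · exact .inl ⟨rfl, by rw [finRotate_last]; rfl⟩
  · exact .inr ⟨Fin.val_lt_last hx, coe_finRotate_of_ne_last hx⟩

theorem sameCycle_finRotate (x y : Fin (n + 1)) : (finRotate (n + 1)).SameCycle x y := by
  suffices h : ∀ x, (finRotate (n + 1)).SameCycle 0 x from (h x).symm.trans (h y)
  refine Fin.induction .rfl fun i hi => hi.trans ?_
  rw [← Fin.coeSucc_eq_succ, ← finRotate_apply]
  exact sameCycle_apply_right.2 .rfl

theorem cycleCount_finRotate : cycleCount (finRotate (n + 1)) = 1 := by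
  rw [cycleCount_eq_ncard_cycleMins, Set.ncard_eq_one]
  exact ⟨0, Set.eq_singleton_iff_unique_mem.2
    ⟨fun y _ => Fin.zero_le y, fun x hx => Fin.le_zero_iff.1 (hx 0 (sameCycle_finRotate x 0))⟩⟩

theorem cycleCount_add_cycleCount_inv_mul_finRotate_le (σ : Perm (Fin (n + 1))) :
    cycleCount σ + cycleCount (σ⁻¹ * finRotate (n + 1)) ≤ n + 2 := by
  have := cycleCount_add_cycleCount_le σ (σ⁻¹ * finRotate (n + 1))
  rw [mul_inv_cancel_left, cycleCount_finRotate] at this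
  omega

theorem precLe_finRotate_iff (σ : Perm (Fin (n + 1))) :
    precLe σ (finRotate (n + 1)) ↔ cycleCount σ + cycleCount (σ⁻¹ * finRotate (n + 1)) = n + 2 := by
  have := cycleCount_le σ
  have := cycleCount_le (σ⁻¹ * finRotate (n + 1))
  have := cycleCount_add_cycleCount_inv_mul_finRotate_le σ
  simp only [precLe, normPerm, cycleCount_finRotate]
  omega

end CycleCount

section CyclicOrder

variable {n : ℕ} {σ : Perm (Fin n)} {u m p q x y : Fin n}

/-- Condition (1) read on the circle: `σ x` is the first point of the cycle of `x` met when walking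
cyclically upwards from `x`. -/
def CyclicallyOrdered (σ : Perm (Fin n)) : Prop :=
  ∀ x y, σ.SameCycle x y → y ≠ x → btw x (σ x) y

def NonCrossing (σ : Perm (Fin n)) : Prop :=
  ¬ ∃ p q r s : Fin n, p < q ∧ q < r ∧ r < s ∧
    σ.SameCycle p r ∧ σ.SameCycle q s ∧ ¬ σ.SameCycle p q

/-- The interval `(min x y, max x y]` is a union of cycles of `σ`: a point `p` lies in it exactly
when `x < p ↔ y < p` fails. -/
def KrewerasRel (σ : Perm (Fin n)) (x y : Fin n) : Prop :=
  ∀ p q, σ.SameCycle p q → ((x < p ↔ y < p) ↔ (x < q ↔ y < q))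

theorem cyclicallyOrdered_iff : CyclicallyOrdered σ ↔
    ∀ x : Fin n, σ x ≠ x →
      ((∃ y, σ.SameCycle x y ∧ x < y) →
        x < σ x ∧ ∀ y, σ.SameCycle x y → x < y → σ x ≤ y) ∧
      ((∀ y, σ.SameCycle x y → y ≤ x) → ∀ y, σ.SameCycle x y → σ x ≤ y) := by
  have hσx : ∀ x, σ.SameCycle x (σ x) := fun x => sameCycle_apply_right.2 .rfl
  constructor
  · intro hO x hx
    refine ⟨fun ⟨y, hy, hxy⟩ => ?_, fun hmax y hy => ?_⟩
    · have := hO x y hy hxy.ne'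
      rw [Fin.btw_iff] at this
      have hlt : x < σ x := by omega
      refine ⟨hlt, fun z hz hxz => ?_⟩
      have := hO x z hz hxz.ne'
      rw [Fin.btw_iff] at this
      omega
    · have := hmax _ (hσx x)
      rcases eq_or_ne y x with rfl | hyx
      · exact this
      have := hO x y hy hyx
      have := hmax y hy
      rw [Fin.btw_iff] at *
      omega
  · intro h x y hxy hyx
    have hx : σ x ≠ x := fun hfix => hyx (hxy.eq_of_left hfix).symm
    rw [Fin.btw_iff]
    by_cases hmax : ∀ z, σ.SameCycle x z → z ≤ x
    · have := (h x hx).2 hmax y hxy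
      have := hmax y hxy
      omega
    · push Not at hmax
      obtain ⟨hlt, hmin⟩ := (h x hx).1 hmax
      rcases lt_or_gt_of_ne hyx with hyx | hyx
      · omega
      · have := hmin y hxy hyx
        omega

theorem cyclicallyOrdered_one : CyclicallyOrdered (1 : Perm (Fin n)) :=
  fun _ _ h hyx => absurd (sameCycle_one.1 h).symm hyx

theorem nonCrossing_one : NonCrossing (1 : Perm (Fin n)) := by
  rintro ⟨p, q, r, -, hpq, hqr, -, hpr, -, -⟩
  rw [sameCycle_one] at hpr
  exact (hpq.trans hqr).ne hpr

theorem NonCrossing.sameCycle_of_sbtw (hN : NonCrossing σ) {a b c d : Fin n}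
    (habc : sbtw a b c) (hcda : sbtw c d a) (hac : σ.SameCycle a c) (hbd : σ.SameCycle b d) :
    σ.SameCycle a b := by
  have key : ∀ {p q r s}, p < q → q < r → r < s → σ.SameCycle p r → σ.SameCycle q s →
      σ.SameCycle p q :=
    fun h1 h2 h3 h4 h5 => by_contra fun h6 => hN ⟨_, _, _, _, h1, h2, h3, h4, h5, h6⟩
  rw [Fin.sbtw_iff] at habc hcda
  obtain h | h | h | h : (a < b ∧ b < c ∧ c < d) ∨ (b < c ∧ c < d ∧ d < a) ∨
      (c < d ∧ d < a ∧ a < b) ∨ (d < a ∧ a < b ∧ b < c) := by omega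
  · exact key h.1 h.2.1 h.2.2 hac hbd
  · exact hac.trans (key h.1 h.2.1 h.2.2 hbd hac.symm).symm
  · exact hac.trans ((key h.1 h.2.1 h.2.2 hac.symm hbd.symm).trans hbd.symm)
  · exact (key h.1 h.2.1 h.2.2 hbd.symm hac).symm.trans hbd.symm

/-- The gap of the cycle of `y` between `y` and `σ y` (everything but `y` if `y` is fixed) is a
union of cycles: a cycle meeting it and its complement would cross the cycle of `y`. -/
theorem CyclicallyOrdered.mem_gap_iff (hO : CyclicallyOrdered σ) (hN : NonCrossing σ)
    (y : Fin n) (hpq : σ.SameCycle p q) :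
    (p ≠ y ∧ p ≠ σ y ∧ btw y p (σ y)) ↔ (q ≠ y ∧ q ≠ σ y ∧ btw y q (σ y)) := by
  have hy : σ.SameCycle y (σ y) := sameCycle_apply_right.2 .rfl
  suffices H : ∀ p q, σ.SameCycle p q → (p ≠ y ∧ p ≠ σ y ∧ btw y p (σ y)) →
      (q ≠ y ∧ q ≠ σ y ∧ btw y q (σ y)) from ⟨H p q hpq, H q p hpq.symm⟩
  rintro p q hpq ⟨hpy, hpσy, hp⟩
  have hyp : ¬σ.SameCycle y p := fun hyp => by
    have hσy : σ y ≠ y := fun hfix => hpy (hyp.eq_of_left hfix).symm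
    have := hO y p hyp hpy
    rw [Fin.btw_iff] at hp this
    omega
  have hyq : ¬σ.SameCycle y q := fun hyq => hyp (hyq.trans hpq.symm)
  refine ⟨fun h => hyq (h ▸ .rfl), fun h => hyq (h ▸ hy), by_contra fun hq => hyp ?_⟩
  rw [Fin.btw_iff] at hp hq
  exact hN.sameCycle_of_sbtw (c := σ y) (d := q) (by rw [Fin.sbtw_iff]; omega)
    (by rw [Fin.sbtw_iff]; omega) hy hpq

theorem krewerasRel_equivalence (σ : Perm (Fin n)) : Equivalence (KrewerasRel σ) where
  refl _ _ _ _ := iff_of_true Iff.rfl Iff.rfl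
  symm h p q hpq := by have := h p q hpq; tauto
  trans h₁ h₂ p q hpq := by have := h₁ p q hpq; have := h₂ p q hpq; tauto

theorem KrewerasRel.symm (h : KrewerasRel σ x y) : KrewerasRel σ y x :=
  (krewerasRel_equivalence σ).symm h

/-- For `u ≠ m`, `KrewerasRel σ u m` says that the cyclic arc `(u, m]` is a union of cycles. -/
theorem KrewerasRel.mem_arc_iff (h : KrewerasRel σ u m) (hum : u ≠ m) (hpq : σ.SameCycle p q) :
    (p ≠ u ∧ btw u p m) ↔ (q ≠ u ∧ btw u q m) := by
  have := h p q hpq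
  rw [Fin.btw_iff, Fin.btw_iff]
  omega

theorem KrewerasRel.of_sameCycle_inv_mul_finRotate {n : ℕ} {σ : Perm (Fin (n + 1))}
    {x y : Fin (n + 1)} (hO : CyclicallyOrdered σ) (hN : NonCrossing σ)
    (h : (σ⁻¹ * finRotate (n + 1)).SameCycle x y) : KrewerasRel σ x y := by
  refine h.rel_of_forall_apply (krewerasRel_equivalence σ).refl
    (krewerasRel_equivalence σ).trans fun z p q hpq => ?_
  set w := (σ⁻¹ * finRotate (n + 1)) z
  have hw : σ w = finRotate (n + 1) z := by simp [w]
  -- with `σ w = z + 1`, the gap after `w` is the interval between `w` and `z`, or its complement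
  have hgap : ∀ p, (p ≠ w ∧ p ≠ σ w ∧ btw w p (σ w)) ↔ ((z < p ↔ w < p) ↔ z < w) := by
    intro p
    have := val_finRotate z
    rw [hw, Fin.btw_iff]
    omega
  have := hO.mem_gap_iff hN w hpq
  rw [hgap, hgap] at this
  tauto

end CyclicOrder

section Merge

variable {n : ℕ} {σ : Perm (Fin n)} {u m x y : Fin n}

theorem sameCycle_swap_apply_mul_iff (hum : ¬σ.SameCycle u m) :
    (swap (σ u) (σ m) * σ).SameCycle x y ↔ σ.SameCycle x y ∨
      (σ.SameCycle u x ∨ σ.SameCycle m x) ∧ (σ.SameCycle u y ∨ σ.SameCycle m y) := by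
  rw [sameCycle_swap_mul_iff (by rwa [sameCycle_apply_left, sameCycle_apply_right])]
  simp only [sameCycle_apply_left]

theorem CyclicallyOrdered.btw_swap_apply_mul_apply (hO : CyclicallyOrdered σ)
    (hum : ¬σ.SameCycle u m) (hK : KrewerasRel σ u m) (hx : σ.SameCycle u x)
    (hy : σ.SameCycle u y ∨ σ.SameCycle m y) (hyx : y ≠ x) :
    btw x ((swap (σ u) (σ m) * σ) x) y := by
  have hne : u ≠ m := fun h => hum (h ▸ .rfl)
  have harc : ∀ p q, σ.SameCycle p q → ((p ≠ u ∧ btw u p m) ↔ (q ≠ u ∧ btw u q m)) :=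
    fun _ _ => hK.mem_arc_iff hne
  have hm : m ≠ u ∧ btw u m m := ⟨hne.symm, btw_rfl_right⟩
  have hσm := (harc m (σ m) (sameCycle_apply_right.2 .rfl)).1 hm
  have hxarc : ¬(x ≠ u ∧ btw u x m) := fun h => ((harc u x hx).2 h).1 rfl
  rcases eq_or_ne x u with rfl | hxu
  · rw [mul_apply, swap_apply_left]
    rcases hy with hy | hy
    · have hyarc : ¬(y ≠ x ∧ btw x y m) := fun h => ((harc x y hy).2 h).1 rfl
      rw [Fin.btw_iff] at *
      omega
    · have hyarc := (harc m y hy).1 hm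
      rcases eq_or_ne y m with rfl | hym
      · exact hσm.2
      have hσm' : σ m ≠ m := fun hfix => hym (hy.eq_of_left hfix).symm
      have := hO m y hy hym
      rw [Fin.btw_iff] at *
      omega
  · have hxm : x ≠ m := fun h => hum (h ▸ hx)
    rw [mul_apply, swap_apply_of_ne_of_ne (σ.injective.ne hxu) (σ.injective.ne hxm)]
    rcases hy with hy | hy
    · exact hO x y (hx.symm.trans hy) hyx
    · have hyarc := (harc m y hy).1 hm
      have := hO x u hx.symm hxu.symm
      rw [Fin.btw_iff] at *
      omega

theorem CyclicallyOrdered.swap_apply_mul (hO : CyclicallyOrdered σ) (hum : ¬σ.SameCycle u m)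
    (hK : KrewerasRel σ u m) : CyclicallyOrdered (swap (σ u) (σ m) * σ) := by
  intro x y hxy hyx
  rw [sameCycle_swap_apply_mul_iff hum] at hxy
  by_cases hx : σ.SameCycle u x ∨ σ.SameCycle m x
  · have hy : σ.SameCycle u y ∨ σ.SameCycle m y :=
      hxy.elim (fun hxy => hx.imp (·.trans hxy) (·.trans hxy)) (·.2)
    rcases hx with hx | hx
    · exact hO.btw_swap_apply_mul_apply hum hK hx hy hyx
    · rw [swap_comm]
      exact hO.btw_swap_apply_mul_apply (fun h => hum h.symm) hK.symm hx hy.symm hyx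
  · have hxy : σ.SameCycle x y := hxy.resolve_right fun h => hx h.1
    rw [mul_apply, swap_apply_of_ne_of_ne (σ.injective.ne fun h => hx (.inl (h.symm.sameCycle σ)))
      (σ.injective.ne fun h => hx (.inr (h.symm.sameCycle σ)))]
    exact hO x y hxy hyx

theorem sbtw_of_mem_arc_of_not_mem_arc {c e c' : Fin n}
    (hc' : c' ≠ u ∧ btw u c' m) (he : ¬(e ≠ u ∧ btw u e m)) (hmc' : m ≠ c') (h : sbtw c' e c) :
    sbtw c' m c := by
  rw [Fin.btw_iff] at hc' he
  rw [Fin.sbtw_iff] at h ⊢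
  omega

theorem NonCrossing.not_sbtw_of_mem_arc (hN : NonCrossing σ) (hum : ¬σ.SameCycle u m)
    (hK : KrewerasRel σ u m) {e e' c c' : Fin n} (he : σ.SameCycle u e) (he' : σ.SameCycle m e')
    (hc : σ.SameCycle c c') (hcm : ¬σ.SameCycle m c) (hcarc : c ≠ u ∧ btw u c m)
    (h₁ : sbtw e c e') (h₂ : sbtw e' c' e) : False := by
  have hne : u ≠ m := fun h => hum (h ▸ .rfl)
  have hearc : ¬(e ≠ u ∧ btw u e m) := fun h => ((hK.mem_arc_iff hne he).2 h).1 rfl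
  have hcross : sbtw c' m c :=
    sbtw_of_mem_arc_of_not_mem_arc ((hK.mem_arc_iff hne hc).1 hcarc) hearc
    (fun h => hcm (h ▸ hc).symm) (by rw [Fin.sbtw_iff] at *; omega)
  exact hcm (he'.trans (hN.sameCycle_of_sbtw (by rw [Fin.sbtw_iff] at *; omega) hcross hc
    he'.symm).symm)

/-- A cycle separating the cycles of `u` and `m` would lie inside the arc `(u, m]` and cross the
cycle of `m`, or outside it and cross the cycle of `u`. -/
theorem NonCrossing.not_sbtw_of_krewerasRel (hN : NonCrossing σ) (hum : ¬σ.SameCycle u m)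
    (hK : KrewerasRel σ u m) {e e' c c' : Fin n} (he : σ.SameCycle u e) (he' : σ.SameCycle m e')
    (hc : σ.SameCycle c c') (hcu : ¬σ.SameCycle u c) (hcm : ¬σ.SameCycle m c)
    (h₁ : sbtw e c e') (h₂ : sbtw e' c' e) : False := by
  have hne : u ≠ m := fun h => hum (h ▸ .rfl)
  by_cases hcarc : c ≠ u ∧ btw u c m
  · exact hN.not_sbtw_of_mem_arc hum hK he he' hc hcm hcarc h₁ h₂
  · have hcarc' : c ≠ m ∧ btw m c u := by
      have hcu' : c ≠ u := fun h => hcu (h ▸ .rfl)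
      have hcm' : c ≠ m := fun h => hcm (h ▸ .rfl)
      rw [Fin.btw_iff] at hcarc ⊢
      omega
    exact hN.not_sbtw_of_mem_arc (fun h => hum h.symm) hK.symm he' he hc.symm
      (fun h => hcu (h.trans hc.symm)) ((hK.symm.mem_arc_iff hne.symm hc).1 hcarc') h₂ h₁

theorem NonCrossing.swap_apply_mul (hN : NonCrossing σ) (hum : ¬σ.SameCycle u m)
    (hK : KrewerasRel σ u m) : NonCrossing (swap (σ u) (σ m) * σ) := by
  have hsep : ∀ {e c e' c'}, sbtw e c e' → sbtw e' c' e →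
      (σ.SameCycle u e ∨ σ.SameCycle m e) → (σ.SameCycle u e' ∨ σ.SameCycle m e') →
      ¬σ.SameCycle e e' → σ.SameCycle c c' → ¬(σ.SameCycle u c ∨ σ.SameCycle m c) → False := by
    rintro e c e' c' h₁ h₂ (he | he) (he' | he') hee' hc hcM
    · exact hee' (he.symm.trans he')
    · exact hN.not_sbtw_of_krewerasRel hum hK he he' hc (hcM <| .inl ·) (hcM <| .inr ·) h₁ h₂
    · exact hN.not_sbtw_of_krewerasRel hum hK he' he hc.symm (fun h => hcM (.inl (h.trans hc.symm)))
        (fun h => hcM (.inr (h.trans hc.symm))) h₂ h₁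
    · exact hee' (he.symm.trans he')
  rintro ⟨p, q, r, s, hpq, hqr, hrs, hpr, hqs, hnpq⟩
  rw [sameCycle_swap_apply_mul_iff hum] at hpr hqs hnpq
  by_cases hpr' : σ.SameCycle p r
  · by_cases hqs' : σ.SameCycle q s
    · exact hN ⟨p, q, r, s, hpq, hqr, hrs, hpr', hqs', fun h => hnpq (.inl h)⟩
    obtain ⟨hq, hs⟩ := hqs.resolve_left hqs'
    refine hsep (e := q) (c := r) (e' := s) (c' := p) (by rw [Fin.sbtw_iff]; omega)
      (by rw [Fin.sbtw_iff]; omega) hq hs hqs' hpr'.symm fun hr => hnpq (.inr ⟨?_, hq⟩)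
    exact hr.imp (·.trans hpr'.symm) (·.trans hpr'.symm)
  · obtain ⟨hp, hr⟩ := hpr.resolve_left hpr'
    have hq : ¬(σ.SameCycle u q ∨ σ.SameCycle m q) := fun hq => hnpq (.inr ⟨hp, hq⟩)
    exact hsep (e := p) (c := q) (e' := r) (c' := s) (by rw [Fin.sbtw_iff]; omega)
      (by rw [Fin.sbtw_iff]; omega) hp hr hpr' (hqs.resolve_right (hq ·.1)) hq

end Merge

section Geodesic

variable {n : ℕ} {σ : Perm (Fin (n + 1))}

/-- With `v` the least point outside the cycle of `0` and `M` the largest point of the cycle of `v`,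
the interval `[v, M]` is a union of cycles: a cycle meeting it and its complement would cross the
cycle of `0` or that of `v`. -/
theorem NonCrossing.exists_krewerasRel (hN : NonCrossing σ) (h : ∃ t, ¬σ.SameCycle 0 t) :
    ∃ u m, ¬σ.SameCycle u m ∧ KrewerasRel σ u m := by
  obtain ⟨v, hv, hvmin⟩ := wellFounded_lt.has_min {t | ¬σ.SameCycle 0 t} h
  have hlt : ∀ t, t < v → σ.SameCycle 0 t := fun t ht => by_contra fun h => hvmin t h ht
  obtain ⟨u, hu⟩ : ∃ u : Fin (n + 1), (u : ℕ) + 1 = v := by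
    have : (v : ℕ) ≠ 0 := fun h => hv (by rw [show v = 0 from Fin.ext h])
    exact ⟨⟨v - 1, by omega⟩, by simp only; omega⟩
  have hu0 : σ.SameCycle 0 u := hlt u (by omega)
  obtain ⟨M, hvM, hMmax⟩ :=
    (Finset.univ.filter (σ.SameCycle v)).exists_max_image id ⟨v, by simpa using .rfl⟩
  simp only [Finset.mem_filter, Finset.mem_univ, true_and, id] at hvM hMmax
  have hvu : ¬σ.SameCycle u v := fun h => hv (hu0.trans h)
  have hvM' : v ≤ M := hMmax v .rfl
  have hinside : ∀ p q, σ.SameCycle p q → v ≤ p → p ≤ M → v ≤ q ∧ q ≤ M := by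
    intro p q hpq hvp hpM
    by_contra hq
    rcases Nat.lt_or_ge q v with hqv | hqv
    · have hp0 : σ.SameCycle u p := hu0.symm.trans ((hlt q hqv).trans hpq.symm)
      have hpv : p ≠ v := fun h => hvu (h ▸ hp0)
      have hpM : p ≠ M := fun h => hvu (hp0.trans (h ▸ hvM).symm)
      exact hN ⟨u, v, p, M, by omega, by omega, by omega, hp0, hvM, hvu⟩
    · have hqv : ¬σ.SameCycle v q := fun h => by have := hMmax q h; omega
      have hpv : ¬σ.SameCycle v p := fun h => hqv (h.trans hpq)
      have hp : p ≠ v ∧ p ≠ M := ⟨fun h => hpv (h ▸ .rfl), fun h => hpv (h ▸ hvM)⟩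
      exact hN ⟨v, p, M, q, by omega, by omega, by omega, hvM, hpq, hpv⟩
  refine ⟨u, M, fun h => hvu (h.trans hvM.symm), fun p q hpq => ?_⟩
  have := hinside p q hpq
  have := hinside q p hpq.symm
  omega

theorem CyclicallyOrdered.eq_finRotate (hO : CyclicallyOrdered σ) (h : ∀ t, σ.SameCycle 0 t) :
    σ = finRotate (n + 1) := by
  ext x : 1
  have hc := val_finRotate x
  by_cases hcx : finRotate (n + 1) x = x
  · obtain rfl : n = 0 := by rw [Fin.ext_iff] at hcx; omega
    exact Fin.ext (by omega)
  · have hxc : σ.SameCycle x (finRotate (n + 1) x) := (h x).symm.trans (h _)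
    have hσx : σ x ≠ x := fun hfix => hcx (hxc.eq_of_left hfix).symm
    have := hO x _ hxc hcx
    rw [Fin.btw_iff] at this
    exact Fin.ext (by omega)

theorem cycleCount_swap_apply_mul_add_one {u m : Fin (n + 1)} (hum : ¬σ.SameCycle u m) :
    cycleCount (swap (σ u) (σ m) * σ) + 1 = cycleCount σ :=
  cycleCount_swap_mul_add_one (by rwa [sameCycle_apply_left, sameCycle_apply_right])

theorem add_eq_and_sameCycle_of_swap_apply_mul {u m : Fin (n + 1)} (hum : ¬σ.SameCycle u m)
    (h : cycleCount (swap (σ u) (σ m) * σ) +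
      cycleCount ((swap (σ u) (σ m) * σ)⁻¹ * finRotate (n + 1)) = n + 2) :
    cycleCount σ + cycleCount (σ⁻¹ * finRotate (n + 1)) = n + 2 ∧
      (σ⁻¹ * finRotate (n + 1)).SameCycle u m := by
  have hne : u ≠ m := fun h => hum (h ▸ .rfl)
  have hmerge := cycleCount_swap_apply_mul_add_one hum
  have hle := cycleCount_add_cycleCount_inv_mul_finRotate_le σ
  rw [inv_swap_apply_mul, mul_assoc] at h
  by_cases hK : (σ⁻¹ * finRotate (n + 1)).SameCycle u m
  · have := cycleCount_swap_mul_of_sameCycle hne hK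
    exact ⟨by omega, hK⟩
  · have := cycleCount_swap_mul_add_one hK
    omega

theorem add_eq_of_cyclicallyOrdered_of_nonCrossing (hO : CyclicallyOrdered σ)
    (hN : NonCrossing σ) : cycleCount σ + cycleCount (σ⁻¹ * finRotate (n + 1)) = n + 2 := by
  obtain ⟨k, hk⟩ : ∃ k, cycleCount σ = k := ⟨_, rfl⟩
  induction k generalizing σ with
  | zero => exact absurd hk (Nat.one_le_iff_ne_zero.1 (one_le_cycleCount σ))
  | succ k ih =>
    by_cases hall : ∀ t, σ.SameCycle 0 t
    · rw [hO.eq_finRotate hall, inv_mul_cancel, cycleCount_one, cycleCount_finRotate]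
      omega
    push Not at hall
    obtain ⟨u, m, hum, hK⟩ := hN.exists_krewerasRel hall
    have := cycleCount_swap_apply_mul_add_one hum
    exact (add_eq_and_sameCycle_of_swap_apply_mul hum
      (ih (hO.swap_apply_mul hum hK) (hN.swap_apply_mul hum hK) (by omega))).1

/-- Splitting a point `x` off its cycle gives `σ'`, and `σ` is the merge of the cycles of `x` and
`σ⁻¹ x` in `σ'`. -/
theorem cyclicallyOrdered_and_nonCrossing_of_add_eq
    (h : cycleCount σ + cycleCount (σ⁻¹ * finRotate (n + 1)) = n + 2) :
    CyclicallyOrdered σ ∧ NonCrossing σ := by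
  induction hk : n + 1 - cycleCount σ generalizing σ with
  | zero =>
    rw [eq_one_of_cycleCount_eq (le_antisymm (cycleCount_le σ) (by omega))]
    exact ⟨cyclicallyOrdered_one, nonCrossing_one⟩
  | succ k ih =>
    obtain ⟨x, hx⟩ : ∃ x, σ x ≠ x := by
      by_contra! hfix
      rw [show σ = 1 from Equiv.ext hfix, cycleCount_one] at hk
      omega
    set σ' := swap x (σ x) * σ
    have hσ'x : σ' x = x := by simp [σ']
    have hσ : swap (σ' x) (σ' (σ⁻¹ x)) * σ' = σ := by
      rw [hσ'x, show σ' (σ⁻¹ x) = σ x by simp [σ'], swap_mul_self_mul]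
    have hxw : ¬σ'.SameCycle x (σ⁻¹ x) :=
      fun h' => hx (inv_eq_iff_eq.1 (h'.eq_of_left hσ'x).symm).symm
    have hcount := cycleCount_swap_apply_mul_add_one hxw
    rw [hσ] at hcount
    rw [← hσ] at h ⊢
    obtain ⟨h', hK⟩ := add_eq_and_sameCycle_of_swap_apply_mul hxw h
    obtain ⟨hO, hN⟩ := ih h' (by omega)
    have hK := KrewerasRel.of_sameCycle_inv_mul_finRotate hO hN hK
    exact ⟨hO.swap_apply_mul hxw hK, hN.swap_apply_mul hxw hK⟩

end Geodesic

/-- σ ≼ (1 … n) iff every cycle of σ carries the cyclic order induced by (1 … n) and the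
cycles of σ form a non-crossing partition. -/
theorem stmt2 (n : ℕ) (σ : Equiv.Perm (Fin n)) :
    precLe σ (finRotate n) ↔
      (∀ x : Fin n, σ x ≠ x →
          ((∃ y, σ.SameCycle x y ∧ x < y) →
            x < σ x ∧ ∀ y, σ.SameCycle x y → x < y → σ x ≤ y) ∧
          ((∀ y, σ.SameCycle x y → y ≤ x) → ∀ y, σ.SameCycle x y → σ x ≤ y)) ∧
        ¬ ∃ p q r s : Fin n, p < q ∧ q < r ∧ r < s ∧
            σ.SameCycle p r ∧ σ.SameCycle q s ∧ ¬ σ.SameCycle p q := by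
  rw [← cyclicallyOrdered_iff]
  change _ ↔ _ ∧ NonCrossing σ
  rcases n with _ | n
  · exact ⟨fun _ => ⟨fun x => x.elim0, fun ⟨p, _⟩ => p.elim0⟩, fun _ => by simp [precLe, normPerm]⟩
  rw [precLe_finRotate_iff]
  exact ⟨cyclicallyOrdered_and_nonCrossing_of_add_eq,
    fun ⟨hO, hN⟩ => add_eq_of_cyclicallyOrdered_of_nonCrossing hO hN⟩
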